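/- Fix n ≥ 2. Let V = {(i,p) ∈ ℤ × ℤ : 1 ≤ i ≤ n and p ≡ i (mod 2)} and declare an arrow (i,p) → (j,p+1) whenever both vertices lie in V and |i − j| = 1. Let r : ℤ → V be a bijection such that whenever there is an arrow from r(a) to r(b) one has a < b (a 'compatible reading'). Then for every s ∈ ℤ with r(s) = (i,p), the set {t ∈ ℤ : t > s and the first coordinate of r(t) equals i} is nonempty, and if s⁺ denotes its minimum then r(s⁺) = (i, p + 2). -/
import Mathlib

section aux

variable (n : ℤ) (hn : 2 ≤ n)
    (r : ℤ → {x : ℤ × ℤ // 1 ≤ x.1 ∧ x.1 ≤ n ∧ x.2 ≡ x.1 [ZMOD 2]})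
    (hbij : Function.Bijective r)
    (hcomp : ∀ a b : ℤ,
      (|(r a : ℤ × ℤ).1 - (r b : ℤ × ℤ).1| = 1 ∧ (r b : ℤ × ℤ).2 = (r a : ℤ × ℤ).2 + 1) →
        a < b)

include hn hbij hcomp in
/-- One step: reading order increases along a length-2 path `(i,q) → (j,q+1) → (i,q+2)`. -/
lemma stmt15_step (a b : ℤ) (h1 : (r a : ℤ × ℤ).1 = (r b : ℤ × ℤ).1)
    (h2 : (r b : ℤ × ℤ).2 = (r a : ℤ × ℤ).2 + 2) : a < b := by
  obtain ⟨hi1, hi2, hip⟩ := (r a).2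
  set i := (r a : ℤ × ℤ).1 with hidef
  set q := (r a : ℤ × ℤ).2 with hqdef
  -- choose neighbor row j
  have hmod : q % 2 = i % 2 := hip
  obtain ⟨j, hj1, hj2, hji, hjp⟩ :
      ∃ j : ℤ, 1 ≤ j ∧ j ≤ n ∧ |i - j| = 1 ∧ (q + 1) % 2 = j % 2 := by
    rcases lt_or_ge i n with h | h
    · exact ⟨i + 1, by omega, by omega, by rw [abs_eq] <;> omega, by omega⟩
    · exact ⟨i - 1, by omega, by omega, by rw [abs_eq] <;> omega, by omega⟩
  obtain ⟨m, hm⟩ := hbij.2 ⟨(j, q + 1), ⟨hj1, hj2, hjp⟩⟩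
  have hm' : (r m : ℤ × ℤ) = (j, q + 1) := by rw [hm]
  have ham : a < m := hcomp a m ⟨by rw [hm']; exact hji, by rw [hm']⟩
  have hmb : m < b := hcomp m b ⟨by rw [hm', ← h1]; rw [abs_sub_comm] at hji; exact hji,
    by simp [hm', h2]; omega⟩
  exact ham.trans hmb

include hn hbij hcomp in
/-- Reading order respects the vertical order within a row. -/
lemma stmt15_chain (k : ℕ) (a b : ℤ) (h1 : (r a : ℤ × ℤ).1 = (r b : ℤ × ℤ).1)
    (h2 : (r b : ℤ × ℤ).2 = (r a : ℤ × ℤ).2 + 2 * (k + 1)) : a < b := by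
  induction k generalizing a with
  | zero => exact stmt15_step n hn r hbij hcomp a b h1 (by rw [h2]; ring)
  | succ k ih =>
    obtain ⟨hi1, hi2, hip⟩ := (r a).2
    obtain ⟨c, hc⟩ := hbij.2 ⟨((r a : ℤ × ℤ).1, (r a : ℤ × ℤ).2 + 2),
      ⟨hi1, hi2, by have := hip; simp only [Int.ModEq] at *; omega⟩⟩
    have hc' : (r c : ℤ × ℤ) = ((r a : ℤ × ℤ).1, (r a : ℤ × ℤ).2 + 2) := by rw [hc]
    have hac : a < c := stmt15_step n hn r hbij hcomp a c (by rw [hc']) (by rw [hc'])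
    have hcb : c < b := ih c (by rw [hc', ← h1]) (by rw [hc']; push_cast at h2 ⊢; omega)
    exact hac.trans hcb

include hn hbij hcomp in
lemma stmt15_mono (a b : ℤ) (h1 : (r a : ℤ × ℤ).1 = (r b : ℤ × ℤ).1)
    (h2 : (r a : ℤ × ℤ).2 < (r b : ℤ × ℤ).2) : a < b := by
  have pa := (r a).2.2.2
  have pb := (r b).2.2.2
  simp only [Int.ModEq] at pa pb
  have : ∃ k : ℕ, (r b : ℤ × ℤ).2 = (r a : ℤ × ℤ).2 + 2 * (k + 1) := by
    refine ⟨((r b : ℤ × ℤ).2 - (r a : ℤ × ℤ).2 - 2).toNat / 2, ?_⟩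
    rw [h1] at pa
    have h4 : (2 : ℤ) ∣ (r b : ℤ × ℤ).2 - (r a : ℤ × ℤ).2 := by omega
    obtain ⟨d, hd⟩ := h4
    have hd1 : 1 ≤ d := by omega
    have : (((r b : ℤ × ℤ).2 - (r a : ℤ × ℤ).2 - 2).toNat : ℤ) = 2 * d - 2 := by omega
    omega
  obtain ⟨k, hk⟩ := this
  exact stmt15_chain n hn r hbij hcomp k a b h1 hk

end aux

/-- Compatible readings of the type `A_{n-1}^{(1)}` repetition quiver: let
`V = {(i,p) ∈ ℤ × ℤ : 1 ≤ i ≤ n, p ≡ i (mod 2)}` with arrows `(i,p) → (j,p+1)` for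
`|i-j| = 1`, and let `r : ℤ → V` be a bijection such that sources of arrows are read before
targets.  Then for `r s = (i,p)`, the set `{t > s : r(t) has first coordinate i}` is
nonempty, and its least element `s⁺` satisfies `r(s⁺) = (i, p+2)`. -/
theorem stmt15 (n : ℤ) (hn : 2 ≤ n)
    (r : ℤ → {x : ℤ × ℤ // 1 ≤ x.1 ∧ x.1 ≤ n ∧ x.2 ≡ x.1 [ZMOD 2]})
    (hbij : Function.Bijective r)
    (hcomp : ∀ a b : ℤ,
      (|(r a : ℤ × ℤ).1 - (r b : ℤ × ℤ).1| = 1 ∧ (r b : ℤ × ℤ).2 = (r a : ℤ × ℤ).2 + 1) →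
        a < b)
    (s i p : ℤ) (hs : (r s : ℤ × ℤ) = (i, p)) :
    {t : ℤ | s < t ∧ (r t : ℤ × ℤ).1 = i}.Nonempty ∧
      ∀ sp : ℤ, IsLeast {t : ℤ | s < t ∧ (r t : ℤ × ℤ).1 = i} sp →
        (r sp : ℤ × ℤ) = (i, p + 2) := by
  have hV := (r s).2
  rw [hs] at hV
  obtain ⟨hi1, hi2, hip⟩ := hV
  -- the element mapping to (i, p+2)
  obtain ⟨u, hu⟩ := hbij.2 ⟨(i, p + 2), ⟨hi1, hi2, by simp only [Int.ModEq] at hip ⊢; omega⟩⟩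
  have hu' : (r u : ℤ × ℤ) = (i, p + 2) := by rw [hu]
  have hsu : s < u := stmt15_mono n hn r hbij hcomp s u
    (by rw [hs, hu']) (by rw [hs, hu']; omega)
  refine ⟨⟨u, hsu, by rw [hu']⟩, ?_⟩
  rintro sp ⟨⟨hssp, hspi⟩, hmin⟩
  have hsp_le_u : sp ≤ u := hmin ⟨hsu, by rw [hu']⟩
  -- r sp = (i, q); show q = p + 2
  rcases lt_trichotomy (r sp : ℤ × ℤ).2 (p + 2) with h | h | h
  · -- then q ≤ p (same parity); q = p impossible (injectivity); q < p gives sp < s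
    have hq : (r sp : ℤ × ℤ).2 % 2 = p % 2 := by
      have := (r sp).2.2.2
      simp only [Int.ModEq] at this hip
      omega
    rcases eq_or_lt_of_le (show (r sp : ℤ × ℤ).2 ≤ p by omega) with he | hl
    · have hco : (r sp : ℤ × ℤ) = (r s : ℤ × ℤ) := by
        rw [hs]; exact Prod.ext hspi he
      exact absurd (hbij.1 (Subtype.ext hco)) (by omega)
    · have : sp < s := stmt15_mono n hn r hbij hcomp sp s
        (by rw [hs, hspi]) (by rw [hs]; exact hl)
      omega
  · exact Prod.ext hspi h
  · -- then u < sp, contradicting minimality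
    have : u < sp := stmt15_mono n hn r hbij hcomp u sp
      (by rw [hu', hspi]) (by rw [hu']; exact h)
    omega
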